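/- arXiv:1610.07712 — 2 statements merged into one kernel-verified Lean document; each statement's English description precedes it below -/
import Mathlib

section
/- Let p be a prime, let χ be a non-principal Dirichlet character mod p, and let f : [0,1] → ℝ be a function with Fourier coefficients (a_n)_{n∈ℤ} such that f(x) = ∑_{n=-∞}^{∞} a_n e^{2πinx} pointwise for all x ∈ (0,1), with S(f) = ∑_{n≠0} |a_n| convergent. Then |∑_{k=1}^{p-1} χ(k) f(k/p)| ≤ S(f) √p. -/
/-!
Expanding each `f (k / p)` in its Fourier series and exchanging the finite and infinite sums
turns the character sum into `∑ₙ aₙ ∑ₖ χ(k) e(nk/p)`. Since `χ` is primitive (its level is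
prime), the inner sum is `χ⁻¹(n) τ(χ)` with `τ(χ)` the Gauss sum, which vanishes for `n = 0`
and has absolute value `√p` otherwise because `|τ(χ)|² = p`.
-/

open Finset ZMod

lemma MulChar.norm_gaussSum_eq_sqrt_card {F : Type*} [Field F] [Fintype F] {χ : MulChar F ℂ}
    (hχ : χ ≠ 1) {ψ : AddChar F ℂ} (hψ : ψ.IsPrimitive) :
    ‖gaussSum χ ψ‖ = √(Fintype.card F) := by
  have h := gaussSum_mul_gaussSum_eq_card hχ hψ
  rw [← star_gaussSum_eq, RCLike.star_def, Complex.mul_conj] at h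
  rw [Complex.norm_def, show Complex.normSq (gaussSum χ ψ) = Fintype.card F by exact_mod_cast h]

lemma DirichletCharacter.isPrimitive_of_ne_one {R : Type*} [CommMonoidWithZero R] {p : ℕ}
    (hp : p.Prime) {χ : DirichletCharacter R p} (hχ : χ ≠ 1) : χ.IsPrimitive := by
  have : NeZero p := ⟨hp.ne_zero⟩
  refine (hp.eq_one_or_self_of_dvd _ χ.conductor_dvd_level).resolve_left fun h ↦ hχ ?_
  exact χ.eq_one_iff_conductor_eq_one.mpr h

lemma ZMod.sum_Icc_one_eq_sum {M : Type*} [AddCommMonoid M] {N : ℕ} [NeZero N]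
    {b : ZMod N → M} (hb : b 0 = 0) :
    ∑ k ∈ Icc 1 (N - 1), b k = ∑ x : ZMod N, b x := by
  have hrange : range N = insert 0 (Icc 1 (N - 1)) := by
    have := NeZero.pos N
    ext k; simp only [mem_range, mem_insert, mem_Icc]; omega
  have h : ∑ k ∈ range N, b k = ∑ x : ZMod N, b x :=
    sum_nbij' (fun k ↦ k) ZMod.val (fun _ _ ↦ mem_univ _) (fun x _ ↦ mem_range.mpr x.val_lt)
      (fun _ hk ↦ ZMod.val_cast_of_lt (mem_range.mp hk)) (fun x _ ↦ ZMod.natCast_zmod_val x)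
      fun _ _ ↦ rfl
  rwa [hrange, sum_insert (by simp), Nat.cast_zero, hb, zero_add] at h

lemma ZMod.cexp_intCast_mul_div_eq_stdAddChar {N : ℕ} [NeZero N] (n : ℤ) (k : ℕ) :
    Complex.exp (2 * Real.pi * Complex.I * n * ((k / N : ℝ) : ℂ)) =
      stdAddChar ((n : ZMod N) * (k : ZMod N)) := by
  rw [show (n : ZMod N) * k = ((n * k : ℤ) : ZMod N) by push_cast; rfl, stdAddChar_coe]
  push_cast
  ring_nf

lemma DirichletCharacter.IsPrimitive.sum_Icc_mul_stdAddChar {N : ℕ} [NeZero N]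
    [Nontrivial (ZMod N)] {χ : DirichletCharacter ℂ N} (hχ : χ.IsPrimitive) (n : ZMod N) :
    ∑ k ∈ Icc 1 (N - 1), χ k * stdAddChar (n * (k : ZMod N)) = χ⁻¹ n * gaussSum χ stdAddChar := by
  rw [ZMod.sum_Icc_one_eq_sum (b := fun x ↦ χ x * stdAddChar (n * x))
      (by rw [MulChar.map_zero, zero_mul]),
    ← gaussSum_mulShift_of_isPrimitive _ hχ]
  rfl

lemma tsum_mul_sum_eq_sum_mul_tsum {ι κ R : Type*} [NonUnitalCommSemiring R] [TopologicalSpace R]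
    [IsTopologicalSemiring R] [T2Space R] {a : ι → R} {c : κ → R} {e : ι → κ → R} {s : Finset κ}
    (h : ∀ k ∈ s, Summable fun n ↦ a n * e n k) :
    ∑' n, a n * ∑ k ∈ s, c k * e n k = ∑ k ∈ s, c k * ∑' n, a n * e n k := by
  simp_rw [mul_sum, mul_left_comm (a _)]
  rw [Summable.tsum_finsetSum fun k hk ↦ (h k hk).mul_left (c k)]
  exact sum_congr rfl fun k hk ↦ (h k hk).tsum_mul_left (c k)

lemma norm_tsum_mul_le_tsum_norm_subtype {ι R : Type*} [NormedRing R] {a w : ι → R} {s : Set ι}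
    (hw : ∀ i ∉ s, w i = 0) (hw1 : ∀ i, ‖w i‖ ≤ 1) (ha : Summable fun i : s ↦ ‖a i‖) :
    ‖∑' i, a i * w i‖ ≤ ∑' i : s, ‖a i‖ := by
  have hle (i : ι) : ‖a i * w i‖ ≤ ‖a i‖ :=
    (norm_mul_le _ _).trans (mul_le_of_le_one_right (norm_nonneg _) (hw1 i))
  have hsum : Summable fun i : s ↦ ‖a i * w i‖ :=
    ha.of_nonneg_of_le (fun _ ↦ norm_nonneg _) fun i ↦ hle i
  have hsupp : Function.support (fun i ↦ a i * w i) ⊆ s :=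
    Function.support_subset_iff'.mpr fun i hi ↦ by rw [hw i hi, mul_zero]
  rw [← tsum_subtype_eq_of_support_subset hsupp]
  exact (norm_tsum_le_tsum_norm hsum).trans (hsum.tsum_le_tsum (fun i ↦ hle i) ha)

/-- Let `p` be a prime, `χ` a non-principal Dirichlet character mod `p`, and `f : [0,1] → ℝ`
with pointwise convergent Fourier series `f(x) = ∑ aₙ e^{2πinx}` on `(0,1)` and
`S(f) = ∑_{n≠0} |aₙ| < ∞`. Then `|∑_{k=1}^{p-1} χ(k) f(k/p)| ≤ S(f) √p`. -/
theorem char_sum_fourier_bound (p : ℕ) (hp : p.Prime)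
    (χ : DirichletCharacter ℂ p) (hχ : χ ≠ 1)
    (f : ℝ → ℝ) (a : ℤ → ℂ)
    (hf : ∀ x ∈ Set.Ioo (0 : ℝ) 1,
      (f x : ℂ) = ∑' n : ℤ, a n * Complex.exp (2 * Real.pi * Complex.I * (n : ℂ) * (x : ℂ)))
    (hS : Summable fun n : {n : ℤ // n ≠ 0} => ‖a n‖) :
    ‖∑ k ∈ Finset.Icc 1 (p - 1), χ ((k : ℕ) : ZMod p) * (f ((k : ℝ) / p) : ℂ)‖
      ≤ (∑' n : {n : ℤ // n ≠ 0}, ‖a n‖) * Real.sqrt p := by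
  have : Fact p.Prime := ⟨hp⟩
  have hSa : Summable fun n : ℤ ↦ ‖a n‖ :=
    (Set.finite_singleton (0 : ℤ)).summable_compl_iff.mp hS
  have hfourier : ∀ k ∈ Icc 1 (p - 1),
      (f ((k : ℝ) / p) : ℂ) = ∑' n : ℤ, a n * stdAddChar ((n : ZMod p) * (k : ZMod p)) := by
    intro k hk
    obtain ⟨hk1, hkp⟩ := mem_Icc.mp hk
    have hx : (k : ℝ) / p ∈ Set.Ioo (0 : ℝ) 1 :=
      ⟨div_pos (by exact_mod_cast hk1) (by exact_mod_cast hp.pos),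
        (div_lt_one (by exact_mod_cast hp.pos)).mpr (by exact_mod_cast (by omega : k < p))⟩
    simp_rw [hf _ hx, ZMod.cexp_intCast_mul_div_eq_stdAddChar]
  have hsummable (k : ℕ) : Summable fun n : ℤ ↦ a n * stdAddChar ((n : ZMod p) * (k : ZMod p)) :=
    .of_norm (by simpa [stdAddChar_apply, Circle.norm_coe] using hSa)
  calc _ = ‖∑' n : ℤ, a n *
          ∑ k ∈ Icc 1 (p - 1), χ k * stdAddChar ((n : ZMod p) * (k : ZMod p))‖ := by
        rw [sum_congr rfl fun k hk ↦ by rw [hfourier k hk],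
          tsum_mul_sum_eq_sum_mul_tsum fun k _ ↦ hsummable k]
    _ = ‖gaussSum χ stdAddChar‖ * ‖∑' n : ℤ, a n * χ⁻¹ n‖ := by
        simp_rw [(DirichletCharacter.isPrimitive_of_ne_one hp hχ).sum_Icc_mul_stdAddChar,
          ← mul_assoc, tsum_mul_right, norm_mul, mul_comm]
    _ ≤ √p * ∑' n : {n : ℤ // n ≠ 0}, ‖a n‖ := by
        rw [MulChar.norm_gaussSum_eq_sqrt_card hχ (ZMod.isPrimitive_stdAddChar p), ZMod.card]
        gcongr
        exact norm_tsum_mul_le_tsum_norm_subtype (s := {n | n ≠ 0})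
          (fun n hn ↦ by rw [not_not.mp hn, Int.cast_zero, MulChar.map_zero])
          (fun n ↦ (χ⁻¹).norm_le_one _) hS
    _ = _ := mul_comm _ _
end

section
/- Let δ and t be real numbers with 0 < δ ≤ 1/3 and 0 < t ≤ 1/(1 + 3δ²), let α, β be real numbers, and let x be a real number such that the fractional parts of x − α and of x − β both lie in [δ, 1 − δ]. Then (1/π) |∑_{n=1}^{∞} (1 − t^n)[sin(2πn(x − α)) − sin(2πn(x − β))]/n| ≤ (1/δ)(1/t − 1). -/
/-!
By Abel's limit theorem the series `∑ (1 - tⁿ) sin (2πnθ) / n` equals the boundary value at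
`r = 1` of `Im log ((1 - t r e(θ)) / (1 - r e(θ)))`, `e(θ) = exp (2πiθ)`, i.e. the difference of
arguments `arg (1 - t e) - arg (1 - e) = arg ((1 - t e) (1 - ē))`. That product has real part
`(1 + t)(1 - cos 2πθ)` and imaginary part `(1 - t) sin 2πθ`, so its argument is at most
`(1 - t)/(1 + t) · |cot πθ|`, and Jordan's inequality `sin πu ≥ 2u` on `[0, 1/2]` bounds
`|cot πθ| ≤ 1/(2δ)` when the fractional part of `θ` lies in `[δ, 1 - δ]`. Adding the bounds for
`x - α` and `x - β` and dividing by `π` leaves `(1 - t)/(πδ(1 + t)) ≤ (1 - t)/(δt)`.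
-/

open Real Filter Topology Finset Set ComplexConjugate

lemma abs_le_abs_tan {x : ℝ} (hx : |x| < π / 2) : |x| ≤ |tan x| := by
  rcases le_total 0 x with h | h
  · rw [abs_of_nonneg h] at hx ⊢
    exact (le_tan h hx).trans (le_abs_self _)
  · rw [abs_of_nonpos h] at hx ⊢
    rw [← abs_neg, ← tan_neg]
    exact (le_tan (neg_nonneg.2 h) hx).trans (le_abs_self _)

lemma two_mul_le_sin_pi_mul {δ u : ℝ} (hδ : 0 ≤ δ) (h₁ : δ ≤ u) (h₂ : u ≤ 1 - δ) :
    2 * δ ≤ sin (π * u) := by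
  have jordan : ∀ v, δ ≤ v → v ≤ 1 / 2 → 2 * δ ≤ sin (π * v) := fun v hv₁ hv₂ => by
    have h := mul_le_sin (x := π * v) (by nlinarith [pi_pos]) (by nlinarith [pi_pos])
    rw [show 2 / π * (π * v) = 2 * v by field_simp] at h
    linarith
  rcases le_total u (1 / 2) with h | h
  · exact jordan u h₁ h
  · rw [← sin_pi_sub, ← mul_one_sub]
    exact jordan (1 - u) (by linarith) (by linarith)

lemma two_mul_le_abs_sin_pi_mul {δ θ : ℝ} (hδ : 0 ≤ δ) (hθ : Int.fract θ ∈ Icc δ (1 - δ)) :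
    2 * δ ≤ |sin (π * θ)| := by
  have hsin : sin (π * θ) = (-1) ^ ⌊θ⌋ * sin (π * Int.fract θ) := by
    rw [← sin_add_int_mul_pi, Int.fract]
    ring_nf
  rw [hsin, abs_mul, abs_neg_one_zpow, one_mul]
  exact (two_mul_le_sin_pi_mul hδ hθ.1 hθ.2).trans (le_abs_self _)

lemma cos_two_pi_mul_lt_one {δ θ : ℝ} (hδ : 0 < δ) (hθ : Int.fract θ ∈ Icc δ (1 - δ)) :
    cos (2 * π * θ) < 1 := by
  have h := two_mul_le_abs_sin_pi_mul hδ.le hθ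
  rw [mul_assoc, cos_two_mul_eq_one_sub, ← sq_abs]
  nlinarith

lemma two_mul_abs_sin_two_pi_mul_le {δ θ : ℝ} (hδ : 0 ≤ δ) (hθ : Int.fract θ ∈ Icc δ (1 - δ)) :
    2 * δ * |sin (2 * π * θ)| ≤ 1 - cos (2 * π * θ) := by
  have hs := two_mul_le_abs_sin_pi_mul hδ hθ
  have hc := abs_cos_le_one (π * θ)
  rw [mul_assoc, mul_assoc 2 π, cos_two_mul_eq_one_sub, sin_two_mul, abs_mul, abs_mul, abs_two,
    ← sq_abs]
  have hs₀ := abs_nonneg (sin (π * θ))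
  nlinarith [mul_le_mul_of_nonneg_left hc (mul_nonneg hδ hs₀), mul_le_mul_of_nonneg_right hs hs₀]

namespace Complex

lemma abs_arg_le_abs_im_div_re {q : ℂ} (hq : 0 < q.re) : |arg q| ≤ |q.im / q.re| := by
  rw [← tan_arg]
  exact abs_le_abs_tan (abs_arg_lt_pi_div_two_iff.2 (Or.inl hq))

lemma arg_sub_arg_eq_arg_mul_conj {a b : ℂ} (ha : 0 < a.re) (hb : 0 < b.re) :
    arg a - arg b = arg (a * conj b) := by
  have ha' := abs_lt.1 (abs_arg_lt_pi_div_two_iff.2 (Or.inl ha))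
  have hb' := abs_lt.1 (abs_arg_lt_pi_div_two_iff.2 (Or.inl hb))
  have hconj : arg (conj b) = -arg b := by
    rw [arg_conj, if_neg (by linarith [pi_pos])]
  have ha₀ : a ≠ 0 := fun h => by simp [h] at ha
  have hb₀ : conj b ≠ 0 := (map_ne_zero _).2 fun h => by simp [h] at hb
  rw [arg_mul ha₀ hb₀ (by rw [hconj]; constructor <;> linarith [pi_pos]), hconj, sub_eq_add_neg]

lemma re_one_sub_ofReal_mul_pos {z : ℂ} {t : ℝ} (hz : z.re < 1) (ht₀ : 0 ≤ t) (ht₁ : t ≤ 1) :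
    0 < (1 - t * z).re := by
  simp only [sub_re, one_re, re_ofReal_mul]
  rcases le_total 0 z.re with h | h <;> nlinarith

lemma abs_arg_one_sub_mul_sub_arg_one_sub_le {z : ℂ} {t : ℝ} (hz : ‖z‖ = 1) (hre : z.re < 1)
    (ht₀ : 0 ≤ t) (ht₁ : t ≤ 1) :
    |arg (1 - t * z) - arg (1 - z)| ≤ (1 - t) * |z.im| / ((1 + t) * (1 - z.re)) := by
  have hsq : z.re * z.re + z.im * z.im = 1 := by
    rw [← normSq_apply, ← Complex.sq_norm, hz, one_pow]
  have hre' : ((1 - t * z) * conj (1 - z)).re = (1 + t) * (1 - z.re) := by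
    simp only [mul_re, mul_im, sub_re, sub_im, one_re, one_im, conj_re, conj_im, ofReal_re,
      ofReal_im]
    linear_combination t * hsq
  have him' : ((1 - t * z) * conj (1 - z)).im = (1 - t) * z.im := by
    simp only [mul_re, mul_im, sub_re, sub_im, one_re, one_im, conj_re, conj_im, ofReal_re,
      ofReal_im]
    ring
  have h1 := re_one_sub_ofReal_mul_pos hre ht₀ ht₁
  have h2 : 0 < (1 - z).re := by simpa using hre
  rw [arg_sub_arg_eq_arg_mul_conj h1 h2]
  calc _ ≤ |((1 - t * z) * conj (1 - z)).im / ((1 - t * z) * conj (1 - z)).re| :=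
        abs_arg_le_abs_im_div_re (by rw [hre']; nlinarith)
    _ = _ := by
        rw [hre', him', abs_div, abs_mul, abs_mul, abs_of_nonneg (by linarith : 0 ≤ 1 - t),
          abs_of_pos (by linarith : 0 < 1 + t), abs_of_pos (by linarith : 0 < 1 - z.re)]

lemma hasSum_one_sub_pow_mul_pow_div {w t : ℂ} (hw : ‖w‖ < 1) (ht : ‖t‖ ≤ 1) :
    HasSum (fun n : ℕ => (1 - t ^ n) * w ^ n / n) (log (1 - t * w) - log (1 - w)) := by
  have htw : ‖t * w‖ < 1 := by
    rw [norm_mul]; nlinarith [norm_nonneg w, norm_nonneg t]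
  have h := (hasSum_taylorSeries_neg_log hw).sub (hasSum_taylorSeries_neg_log htw)
  rw [neg_sub_neg] at h
  exact h.congr_fun fun n => by ring

end Complex

lemma tendsto_sum_range_of_tendsto_sum_range_succ {M : Type*} [AddCommMonoid M]
    [TopologicalSpace M] {a : ℕ → M} {L : M} (h₀ : a 0 = 0)
    (h : Tendsto (fun N => ∑ n ∈ range N, a (n + 1)) atTop (𝓝 L)) :
    Tendsto (fun N => ∑ n ∈ range N, a n) atTop (𝓝 L) := by
  refine (tendsto_add_atTop_iff_nat 1).1 ?_
  simpa only [sum_range_succ', h₀, add_zero] using h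

lemma eq_of_tendsto_sum_range_of_hasSum_mul_pow {a : ℕ → ℝ} {L : ℝ} {g : ℝ → ℝ}
    (hL : Tendsto (fun N => ∑ n ∈ range N, a n) atTop (𝓝 L))
    (hg : ∀ r ∈ Ioo (0 : ℝ) 1, HasSum (fun n => a n * r ^ n) (g r))
    (hg₁ : ContinuousAt g 1) : L = g 1 := by
  have hev : (fun r => ∑' n, a n * r ^ n) =ᶠ[𝓝[<] 1] g :=
    eventuallyEq_of_mem (Ioo_mem_nhdsLT zero_lt_one) fun r hr => (hg r hr).tsum_eq
  exact tendsto_nhds_unique ((Real.tendsto_tsum_powerSeries_nhdsWithin_lt hL).congr' hev)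
    (hg₁.tendsto.mono_left nhdsWithin_le_nhds)

/-- For `t = 0`, `r = 1` this is the sawtooth `π (1/2 - fract θ) = ∑ sin (2πnθ) / n`. -/
noncomputable def sawtoothTail (t θ r : ℝ) : ℝ :=
  Complex.arg (1 - t * (r * Complex.exp ((2 * π * θ : ℝ) * Complex.I)))
    - Complex.arg (1 - r * Complex.exp ((2 * π * θ : ℝ) * Complex.I))

lemma im_one_sub_pow_mul_pow_div (t r θ : ℝ) (n : ℕ) :
    ((1 - (t : ℂ) ^ n) * (r * Complex.exp ((2 * π * θ : ℝ) * Complex.I)) ^ n / n).im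
      = (1 - t ^ n) * sin (2 * π * n * θ) / n * r ^ n := by
  have h : (1 - (t : ℂ) ^ n) * (r * Complex.exp ((2 * π * θ : ℝ) * Complex.I)) ^ n / n
      = (((1 - t ^ n) / n * r ^ n : ℝ) : ℂ) * Complex.exp ((2 * π * n * θ : ℝ) * Complex.I) := by
    rw [mul_pow, ← Complex.exp_nat_mul]
    push_cast
    ring_nf
  rw [h, Complex.im_ofReal_mul, Complex.exp_ofReal_mul_I_im]
  ring

lemma hasSum_sawtoothTail {t r : ℝ} (θ : ℝ) (ht : |t| ≤ 1) (hr₀ : 0 ≤ r) (hr₁ : r < 1) :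
    HasSum (fun n : ℕ => (1 - t ^ n) * sin (2 * π * n * θ) / n * r ^ n) (sawtoothTail t θ r) := by
  have hw : ‖(r : ℂ) * Complex.exp ((2 * π * θ : ℝ) * Complex.I)‖ < 1 := by
    rwa [norm_mul, Complex.norm_exp_ofReal_mul_I, mul_one, Complex.norm_real, Real.norm_eq_abs,
      abs_of_nonneg hr₀]
  have h := Complex.hasSum_im (Complex.hasSum_one_sub_pow_mul_pow_div hw
    (t := t) (by rwa [Complex.norm_real, Real.norm_eq_abs]))
  simp only [im_one_sub_pow_mul_pow_div, Complex.sub_im, Complex.log_im] at h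
  exact h

lemma continuousAt_sawtoothTail {δ t θ : ℝ} (hδ : 0 < δ) (hθ : Int.fract θ ∈ Icc δ (1 - δ))
    (ht₀ : 0 ≤ t) (ht₁ : t ≤ 1) : ContinuousAt (sawtoothTail t θ) 1 := by
  have hre : (Complex.exp ((2 * π * θ : ℝ) * Complex.I)).re < 1 := by
    rw [Complex.exp_ofReal_mul_I_re]; exact cos_two_pi_mul_lt_one hδ hθ
  have hslit : ∀ s : ℝ, 0 ≤ s → s ≤ 1 → ContinuousAt
      (fun r : ℝ => Complex.arg (1 - s * (r * Complex.exp ((2 * π * θ : ℝ) * Complex.I)))) 1 :=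
    fun s hs₀ hs₁ => (Complex.continuousAt_arg (Complex.mem_slitPlane_iff.2 (Or.inl
      (by simpa using Complex.re_one_sub_ofReal_mul_pos hre hs₀ hs₁)))).comp (by fun_prop)
  exact (hslit t ht₀ ht₁).sub (by simpa using hslit 1 zero_le_one le_rfl)

lemma abs_sawtoothTail_one_le {δ t θ : ℝ} (hδ : 0 < δ) (hθ : Int.fract θ ∈ Icc δ (1 - δ))
    (ht₀ : 0 ≤ t) (ht₁ : t ≤ 1) : |sawtoothTail t θ 1| ≤ (1 - t) / (2 * δ * (1 + t)) := by
  have hre : (Complex.exp ((2 * π * θ : ℝ) * Complex.I)).re < 1 := by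
    rw [Complex.exp_ofReal_mul_I_re]; exact cos_two_pi_mul_lt_one hδ hθ
  have key := two_mul_abs_sin_two_pi_mul_le hδ.le hθ
  unfold sawtoothTail
  simp only [Complex.ofReal_one, one_mul]
  refine (Complex.abs_arg_one_sub_mul_sub_arg_one_sub_le (Complex.norm_exp_ofReal_mul_I _) hre
    ht₀ ht₁).trans ?_
  rw [Complex.exp_ofReal_mul_I_re, Complex.exp_ofReal_mul_I_im] at *
  rw [div_le_div_iff₀ (by nlinarith) (by positivity)]
  have ht : 0 ≤ (1 - t) * (1 + t) := mul_nonneg (sub_nonneg.2 ht₁) (by linarith)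
  nlinarith [mul_le_mul_of_nonneg_left key ht]

theorem tail_difference_bound_general (δ t α β x : ℝ) (hδ0 : 0 < δ)
    (ht0 : 0 < t) (ht : t ≤ 1 / (1 + 3 * δ ^ 2))
    (hα : Int.fract (x - α) ∈ Set.Icc δ (1 - δ))
    (hβ : Int.fract (x - β) ∈ Set.Icc δ (1 - δ)) (L : ℝ)
    (hL : Filter.Tendsto
      (fun N => ∑ n ∈ Finset.range N,
        (1 - t ^ (n + 1)) * (Real.sin (2 * Real.pi * (n + 1) * (x - α))
          - Real.sin (2 * Real.pi * (n + 1) * (x - β))) / (n + 1))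
      Filter.atTop (nhds L)) :
    (1 / Real.pi) * |L| ≤ (1 / δ) * (1 / t - 1) := by
  have ht1 : t ≤ 1 := ht.trans (div_le_one_of_le₀ (by nlinarith) (by positivity))
  have habs : |t| ≤ 1 := by rwa [abs_of_pos ht0]
  set a : ℕ → ℝ := fun n => (1 - t ^ n) * sin (2 * π * n * (x - α)) / n
    - (1 - t ^ n) * sin (2 * π * n * (x - β)) / n
  have hsum : Tendsto (fun N => ∑ n ∈ range N, a n) atTop (𝓝 L) := by
    refine tendsto_sum_range_of_tendsto_sum_range_succ (by simp [a]) ?_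
    convert hL using 4 with N n
    simp only [a]
    push_cast
    ring
  have hLim : L = sawtoothTail t (x - α) 1 - sawtoothTail t (x - β) 1 :=
    eq_of_tendsto_sum_range_of_hasSum_mul_pow hsum
      (fun r hr => ((hasSum_sawtoothTail _ habs hr.1.le hr.2).sub
        (hasSum_sawtoothTail _ habs hr.1.le hr.2)).congr_fun fun n => sub_mul _ _ _)
      ((continuousAt_sawtoothTail hδ0 hα ht0.le ht1).sub
        (continuousAt_sawtoothTail hδ0 hβ ht0.le ht1))
  have hbound : |L| ≤ (1 - t) / (δ * (1 + t)) := by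
    rw [hLim]
    calc _ ≤ |sawtoothTail t (x - α) 1| + |sawtoothTail t (x - β) 1| := abs_sub _ _
      _ ≤ (1 - t) / (2 * δ * (1 + t)) + (1 - t) / (2 * δ * (1 + t)) :=
        add_le_add (abs_sawtoothTail_one_le hδ0 hα ht0.le ht1)
          (abs_sawtoothTail_one_le hδ0 hβ ht0.le ht1)
      _ = _ := by field_simp; ring
  calc 1 / π * |L| ≤ 1 / π * ((1 - t) / (δ * (1 + t))) := by gcongr
    _ = (1 - t) / (π * δ * (1 + t)) := by field_simp
    _ ≤ (1 - t) / (δ * t) := by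
      have hπ : t < π * (1 + t) := by nlinarith [pi_gt_three]
      exact div_le_div_of_nonneg_left (by linarith) (by positivity) (by nlinarith)
    _ = 1 / δ * (1 / t - 1) := by field_simp

/-- For `0 < δ ≤ 1/3`, `0 < t ≤ 1/(1 + 3δ²)`, and `x` such that the fractional parts of
`x − α` and `x − β` lie in `[δ, 1 − δ]`,
`(1/π)|∑_{n=1}^∞ (1 − tⁿ)[sin(2πn(x − α)) − sin(2πn(x − β))]/n| ≤ (1/δ)(1/t − 1)`. -/
theorem tail_difference_bound (δ t α β x : ℝ) (hδ0 : 0 < δ) (hδ : δ ≤ 1 / 3)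
    (ht0 : 0 < t) (ht : t ≤ 1 / (1 + 3 * δ ^ 2))
    (hα : Int.fract (x - α) ∈ Set.Icc δ (1 - δ))
    (hβ : Int.fract (x - β) ∈ Set.Icc δ (1 - δ)) (L : ℝ)
    (hL : Filter.Tendsto
      (fun N => ∑ n ∈ Finset.range N,
        (1 - t ^ (n + 1)) * (Real.sin (2 * Real.pi * (n + 1) * (x - α))
          - Real.sin (2 * Real.pi * (n + 1) * (x - β))) / (n + 1))
      Filter.atTop (nhds L)) :
    (1 / Real.pi) * |L| ≤ (1 / δ) * (1 / t - 1) :=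
  tail_difference_bound_general δ t α β x hδ0 ht0 ht hα hβ L hL
end
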